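/- arXiv:1301.6398 — 3 statements merged into one kernel-verified Lean document; each statement's English description precedes it below -/
import Mathlib

section
/- (Theorem 1, impossibility of achieving the full-CSIT SER with beamforming.) Let t ≥ 2 and P > 0. For every countable index set I, every family (x_n)_{n∈I} of unit vectors in ℂ^t, and every measurable partition (E_n)_{n∈I} of ℂ^t, one has Σ_{n∈I} ∫_{E_n} Q(√(2·|⟨x_n, h⟩|²·P)) dμ(h) > ∫_{ℂ^t} Q(√(2·‖h‖²·P)) dμ(h). That is, no quantized beamforming scheme achieves the full-CSIT symbol error rate at any power P. -/
/-!
By Cauchy–Schwarz, `|⟨x, h⟩| ≤ ‖h‖` for a unit vector `x`, with equality only on the complex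
line `ℂ x`; since `t ≥ 2` that line is a Lebesgue-null, hence Gaussian-null, set. As `Q ∘ √` is
strictly decreasing, on every cell `E n` the integrand `Q(√(2|⟨x n, h⟩|²P))` is a.e. strictly
larger than `Q(√(2‖h‖²P))`. Summing over the partition, every cell contributes at least its share
of the full-CSIT integral, and a cell of positive Gaussian mass (one must exist) contributes
strictly more.
-/

open MeasureTheory

noncomputable instance (t : ℕ) : MeasureSpace (EuclideanSpace ℂ (Fin t)) where
  toMeasurableSpace := inferInstance
  volume := Measure.map (WithLp.toLp 2) (volume : Measure (Fin t → ℂ))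

/-- The Gaussian tail function `Q(x) = (1/√(2π)) ∫_x^∞ exp(-u²/2) du`. -/
noncomputable def gaussianQ (x : ℝ) : ℝ :=
  (Real.sqrt (2 * Real.pi))⁻¹ * ∫ u in Set.Ioi x, Real.exp (-(u ^ 2) / 2)

/-- The standard complex Gaussian measure `CN(0, I_t)` on `ℂ^t`, with density
`h ↦ π^{-t} exp(-‖h‖²)` with respect to Lebesgue measure. -/
noncomputable def stdCGauss (t : ℕ) : Measure (EuclideanSpace ℂ (Fin t)) :=
  volume.withDensity fun h => ENNReal.ofReal ((Real.pi ^ t)⁻¹ * Real.exp (-‖h‖ ^ 2))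

open Set Filter Function

theorem norm_inner_lt_norm_mul_norm {𝕜 E : Type*} [RCLike 𝕜] [NormedAddCommGroup E]
    [InnerProductSpace 𝕜 E] {x y : E} (hx : x ≠ 0) (hy : y ∉ 𝕜 ∙ x) :
    ‖(inner 𝕜 x y : 𝕜)‖ < ‖x‖ * ‖y‖ :=
  (norm_inner_le_norm x y).lt_of_ne fun h => by
    have := (norm_inner_eq_norm_tfae 𝕜 x y).out 0 3
    exact hy ((this.1 h).resolve_left hx)

theorem MeasureTheory.Measure.addHaar_span_singleton_eq_zero {E : Type*} [NormedAddCommGroup E]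
    [NormedSpace ℂ E] [FiniteDimensional ℂ E] [MeasurableSpace E] [BorelSpace E]
    (μ : Measure E) [μ.IsAddHaarMeasure] (hE : 1 < Module.finrank ℂ E) (x : E) :
    μ (ℂ ∙ x) = 0 := by
  refine Measure.addHaar_submodule μ ((ℂ ∙ x).restrictScalars ℝ) fun htop => ?_
  rw [Submodule.restrictScalars_eq_top_iff] at htop
  have := finrank_span_le_card (R := ℂ) ({x} : Set E)
  rw [htop, finrank_top, Set.toFinset_singleton, Finset.card_singleton] at this
  omega

theorem ae_norm_inner_lt_norm_mul_norm {E : Type*} [NormedAddCommGroup E]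
    [InnerProductSpace ℂ E] [FiniteDimensional ℂ E] [MeasurableSpace E] [BorelSpace E]
    (μ : Measure E) [μ.IsAddHaarMeasure] (hE : 1 < Module.finrank ℂ E) {x : E} (hx : x ≠ 0) :
    ∀ᵐ y ∂μ, ‖(inner ℂ x y : ℂ)‖ < ‖x‖ * ‖y‖ :=
  measure_mono_null (fun _ hy => not_imp_comm.1 (norm_inner_lt_norm_mul_norm hx) hy)
    (Measure.addHaar_span_singleton_eq_zero μ hE x)

-- Any Haar measure is a multiple of the canonical volume of the underlying real inner product
-- space, for which Mathlib provides Gaussian integrability.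
theorem integrable_exp_neg_sq_norm {V : Type*} [NormedAddCommGroup V] [InnerProductSpace ℂ V]
    [FiniteDimensional ℂ V] [MeasurableSpace V] [BorelSpace V] (μ : Measure V)
    [μ.IsAddHaarMeasure] :
    Integrable (fun v : V => Real.exp (-‖v‖ ^ 2)) μ := by
  let _ : InnerProductSpace ℝ V := InnerProductSpace.rclikeToReal ℂ V
  have hcan := (GaussianFourier.integrable_cexp_neg_mul_sq_norm_add (V := V) (b := 1)
    (by simp) 0 0).norm
  rw [Measure.isAddLeftInvariant_eq_smul μ volume]
  refine (hcan.smul_measure ENNReal.coe_ne_top).congr (Eventually.of_forall fun v => ?_)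
  simp [Complex.norm_exp, ← Complex.ofReal_pow]

theorem integral_lt_integral_of_ae_lt {α : Type*} [MeasurableSpace α] {μ : Measure α} [NeZero μ]
    {f g : α → ℝ} (hf : Integrable f μ) (hg : Integrable g μ) (hfg : ∀ᵐ a ∂μ, f a < g a) :
    ∫ a, f a ∂μ < ∫ a, g a ∂μ := by
  rw [← sub_pos, ← integral_sub hg hf, integral_pos_iff_support_of_nonneg_ae
    (hfg.mono fun a h => sub_nonneg.2 h.le) (hg.sub hf), pos_iff_ne_zero]
  intro h0
  obtain ⟨a, hlt, hnot⟩ := (hfg.and (measure_eq_zero_iff_ae_notMem.1 h0)).exists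
  exact hnot (sub_ne_zero.2 hlt.ne')

theorem integral_lt_tsum_setIntegral_of_ae_lt {α ι : Type*} [MeasurableSpace α] [Countable ι]
    {μ : Measure α} [IsFiniteMeasure μ] [NeZero μ] {E : ι → Set α}
    (hEmeas : ∀ n, MeasurableSet (E n)) (hEdisj : Pairwise (Disjoint on E))
    (hEcover : ⋃ n, E n = univ) {g : α → ℝ} {f : ι → α → ℝ} {C : ℝ} (hg : Integrable g μ)
    (hf : ∀ n, AEStronglyMeasurable (f n) μ) (hfC : ∀ n, ∀ᵐ a ∂μ, ‖f n a‖ ≤ C)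
    (hgf : ∀ n, ∀ᵐ a ∂μ, g a < f n a) :
    ∫ a, g a ∂μ < ∑' n, ∫ a in E n, f n a ∂μ := by
  have hfi : ∀ n, Integrable (f n) μ := fun n => Integrable.of_bound (hf n) C (hfC n)
  have hg_sum : HasSum (fun n => ∫ a in E n, g a ∂μ) (∫ a, g a ∂μ) := by
    simpa [hEcover] using hasSum_integral_iUnion hEmeas hEdisj (hEcover ▸ hg.integrableOn)
  have hf_sum : Summable fun n => ∫ a in E n, f n a ∂μ := by
    have hμE : Summable fun n => μ.real (E n) := by
      refine ENNReal.summable_toReal ?_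
      rw [← measure_iUnion hEdisj hEmeas]
      exact measure_ne_top μ _
    refine Summable.of_norm_bounded (hμE.mul_left C) fun n => ?_
    exact norm_setIntegral_le_of_norm_le_const_ae (measure_lt_top μ _) (ae_restrict_of_ae (hfC n))
  obtain ⟨n₀, hn₀⟩ : ∃ n, μ (E n) ≠ 0 := by
    by_contra! h
    exact NeZero.ne μ (Measure.measure_univ_eq_zero.1 (hEcover ▸ measure_iUnion_null h))
  have : NeZero (μ.restrict (E n₀)) := ⟨by simpa using hn₀⟩
  rw [← hg_sum.tsum_eq]
  refine hg_sum.summable.tsum_lt_tsum (i := n₀)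
    (fun n => setIntegral_mono_ae hg.integrableOn (hfi n).integrableOn
      ((hgf n).mono fun _ h => h.le)) ?_ hf_sum
  exact integral_lt_integral_of_ae_lt hg.integrableOn (hfi n₀).integrableOn
    (ae_restrict_of_ae (hgf n₀))

lemma integrable_exp_neg_sq_div_two : Integrable fun u : ℝ => Real.exp (-(u ^ 2) / 2) :=
  (integrable_exp_neg_mul_sq (b := 1 / 2) (by norm_num)).congr
    (Eventually.of_forall fun u => by ring_nf)

lemma gaussianQ_nonneg (x : ℝ) : 0 ≤ gaussianQ x :=
  mul_nonneg (by positivity) (setIntegral_nonneg measurableSet_Ioi fun _ _ => (Real.exp_pos _).le)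

lemma gaussianQ_strictAnti : StrictAnti gaussianQ := by
  intro a b hab
  have hint : ∀ s, IntegrableOn (fun u : ℝ => Real.exp (-(u ^ 2) / 2)) s := fun _ =>
    integrable_exp_neg_sq_div_two.integrableOn
  have hpos : 0 < ∫ u in Ioc a b, Real.exp (-(u ^ 2) / 2) := by
    rw [setIntegral_pos_iff_support_of_nonneg_ae
      (Eventually.of_forall fun u => (Real.exp_pos _).le) (hint _)]
    simpa [Function.support, (Real.exp_pos _).ne'] using hab
  have hsplit : ∫ u in Ioi a, Real.exp (-(u ^ 2) / 2)
      = (∫ u in Ioc a b, Real.exp (-(u ^ 2) / 2)) + ∫ u in Ioi b, Real.exp (-(u ^ 2) / 2) := by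
    rw [← Ioc_union_Ioi_eq_Ioi hab.le,
      setIntegral_union (Ioc_disjoint_Ioi le_rfl) measurableSet_Ioi (hint _) (hint _)]
  exact mul_lt_mul_of_pos_left (by linarith) (by positivity)

lemma measurable_gaussianQ : Measurable gaussianQ := gaussianQ_strictAnti.antitone.measurable

lemma norm_gaussianQ_le {x : ℝ} (hx : 0 ≤ x) : ‖gaussianQ x‖ ≤ gaussianQ 0 := by
  rw [Real.norm_of_nonneg (gaussianQ_nonneg x)]
  exact gaussianQ_strictAnti.antitone hx

lemma gaussianQ_sqrt_lt {P a b : ℝ} (hP : 0 < P) (ha : 0 ≤ a) (hab : a < b) :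
    gaussianQ (Real.sqrt (2 * b ^ 2 * P)) < gaussianQ (Real.sqrt (2 * a ^ 2 * P)) := by
  apply gaussianQ_strictAnti
  gcongr

instance (t : ℕ) : (volume : Measure (EuclideanSpace ℂ (Fin t))).IsAddHaarMeasure :=
  (EuclideanSpace.equiv (Fin t) ℂ).symm.isAddHaarMeasure_map volume

instance (t : ℕ) : IsFiniteMeasure (stdCGauss t) :=
  isFiniteMeasure_withDensity_ofReal ((integrable_exp_neg_sq_norm volume).const_mul _).2

instance (t : ℕ) : NeZero (stdCGauss t) := by
  refine ⟨fun h0 => ?_⟩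
  obtain ⟨h, hh⟩ := (withDensity_eq_zero (by fun_prop) h0).exists
  have : 0 < (Real.pi ^ t)⁻¹ * Real.exp (-‖h‖ ^ 2) := by positivity
  exact (ENNReal.ofReal_pos.2 this).ne' hh

/-- Theorem 1: no quantized beamforming scheme achieves the full-CSIT SER at any power `P`. -/
theorem no_quantizer_achieves_full_csit_ser
    (t : ℕ) (ht : 2 ≤ t) (P : ℝ) (hP : 0 < P)
    (I : Type) (hI : Countable I)
    (x : I → EuclideanSpace ℂ (Fin t)) (hx : ∀ n, ‖x n‖ = 1)
    (E : I → Set (EuclideanSpace ℂ (Fin t)))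
    (hEmeas : ∀ n, MeasurableSet (E n))
    (hEdisj : ∀ m n, m ≠ n → Disjoint (E m) (E n))
    (hEcover : (⋃ n, E n) = Set.univ) :
    (∑' n, ∫ h in E n,
        gaussianQ (Real.sqrt (2 * ‖(inner ℂ (x n) h : ℂ)‖ ^ 2 * P)) ∂(stdCGauss t))
      > ∫ h, gaussianQ (Real.sqrt (2 * ‖h‖ ^ 2 * P)) ∂(stdCGauss t) := by
  have hrank : 1 < Module.finrank ℂ (EuclideanSpace ℂ (Fin t)) := by
    rwa [finrank_euclideanSpace_fin]
  have hbound : ∀ (y : EuclideanSpace ℂ (Fin t) → ℝ) h,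
      ‖gaussianQ (Real.sqrt (y h))‖ ≤ gaussianQ 0 :=
    fun _ _ => norm_gaussianQ_le (Real.sqrt_nonneg _)
  refine integral_lt_tsum_setIntegral_of_ae_lt hEmeas (fun m n => hEdisj m n) hEcover
    (Integrable.of_bound (measurable_gaussianQ.comp (by fun_prop)).aestronglyMeasurable _
      (Eventually.of_forall (hbound _)))
    (fun n => (measurable_gaussianQ.comp (by fun_prop)).aestronglyMeasurable)
    (fun n => Eventually.of_forall (hbound _)) fun n => ?_
  have hx0 : x n ≠ 0 := fun h0 => by simpa [h0] using hx n
  filter_upwards [(withDensity_absolutelyContinuous _ _).ae_le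
    (ae_norm_inner_lt_norm_mul_norm volume hrank hx0)] with h hh
  rw [hx n, one_mul] at hh
  exact gaussianQ_sqrt_lt hP (norm_nonneg _) hh
end

section
/- (Proposition 2, existence of good beamforming codebooks.) Let t ≥ 1. There exists a constant C₀ > 0 (depending only on t) such that for every sufficiently small δ > 0 there is a finite set B_δ of unit vectors in ℂ^t with |B_δ| ≤ C₀·δ^{−2t} and with the covering property: for every unit vector h̄ ∈ ℂ^t there exists x ∈ B_δ with |⟨x, h̄⟩|² ≥ 1 − δ. -/
/-!
Round every complex coordinate of a unit vector `h ∈ ℂ^t` down to the lattice `δ(ℤ + iℤ)`. This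
yields a point `p` of a fixed finite grid with `(2⌈1/δ⌉ + 1)^(2t) ≤ (5/δ)^(2t)` points and
`‖p - h‖² ≤ 2tδ²`. Normalising `p` at most doubles its distance to `h`, and for unit vectors
`Re⟨x, h⟩ = 1 - ‖x - h‖²/2`, whence `|⟨x, h⟩|² ≥ 1 - ‖x - h‖² ≥ 1 - 8tδ² ≥ 1 - δ` for `δ < 1/(8t+1)`.
-/

theorem one_sub_norm_sub_sq_le_norm_inner_sq {𝕜 E : Type*} [RCLike 𝕜] [NormedAddCommGroup E]
    [InnerProductSpace 𝕜 E] {x h : E} (hx : ‖x‖ = 1) (hh : ‖h‖ = 1) :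
    1 - ‖x - h‖ ^ 2 ≤ ‖(inner 𝕜 x h : 𝕜)‖ ^ 2 := by
  have hre : RCLike.re (inner 𝕜 x h) = 1 - ‖x - h‖ ^ 2 / 2 := by
    rw [norm_sub_sq (𝕜 := 𝕜), hx, hh]; ring
  have hsq : RCLike.re (inner 𝕜 x h) ^ 2 ≤ ‖(inner 𝕜 x h : 𝕜)‖ ^ 2 :=
    sq_le_sq' (abs_le.1 (RCLike.abs_re_le_norm _)).1 (RCLike.re_le_norm _)
  rw [hre] at hsq
  nlinarith [sq_nonneg (‖x - h‖ ^ 2)]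

theorem norm_inv_norm_smul_sub_le {E : Type*} [NormedAddCommGroup E] [NormedSpace ℝ E]
    {h : E} (hh : ‖h‖ = 1) (p : E) : ‖‖p‖⁻¹ • p - h‖ ≤ 2 * ‖p - h‖ := by
  rcases eq_or_ne p 0 with rfl | hp
  · simp [hh]
  have hscale : ‖‖p‖⁻¹ • p - p‖ = |‖h‖ - ‖p‖| := by
    rw [show ‖p‖⁻¹ • p - p = (‖p‖⁻¹ - 1) • p by rw [sub_smul, one_smul], norm_smul,
      Real.norm_eq_abs, hh, ← abs_norm p, ← abs_mul, abs_norm]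
    congr 1
    field_simp [norm_ne_zero_iff.2 hp]
  calc ‖‖p‖⁻¹ • p - h‖ ≤ ‖‖p‖⁻¹ • p - p‖ + ‖p - h‖ := norm_sub_le_norm_sub_add_norm_sub _ _ _
    _ ≤ 2 * ‖p - h‖ := by
      rw [hscale, abs_sub_comm]; linarith [abs_norm_sub_norm_le p h]

theorem exists_unit_finset_of_approx {E : Type*} [NormedAddCommGroup E] [NormedSpace ℝ E]
    {S : Finset E} {η : ℝ} (hη : η < 1)
    (hS : ∀ h : E, ‖h‖ = 1 → ∃ p ∈ S, ‖p - h‖ ^ 2 ≤ η) :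
    ∃ B : Finset E, (∀ x ∈ B, ‖x‖ = 1) ∧ B.card ≤ S.card ∧
      ∀ h : E, ‖h‖ = 1 → ∃ x ∈ B, ‖x - h‖ ^ 2 ≤ 4 * η := by
  classical
  refine ⟨(S.erase 0).image fun p => ‖p‖⁻¹ • p, ?_, ?_, fun h hh => ?_⟩
  · simp only [Finset.mem_image, Finset.mem_erase]
    rintro _ ⟨p, ⟨hp, -⟩, rfl⟩
    exact norm_smul_inv_norm hp
  · exact Finset.card_image_le.trans Finset.card_erase_le
  · obtain ⟨p, hpS, hp⟩ := hS h hh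
    have hp0 : p ≠ 0 := by
      rintro rfl
      simp [hh] at hp
      linarith
    refine ⟨‖p‖⁻¹ • p, Finset.mem_image_of_mem _ (Finset.mem_erase.2 ⟨hp0, hpS⟩), ?_⟩
    calc ‖‖p‖⁻¹ • p - h‖ ^ 2 ≤ (2 * ‖p - h‖) ^ 2 :=
          pow_le_pow_left₀ (norm_nonneg _) (norm_inv_norm_smul_sub_le hh p) 2
      _ ≤ 4 * η := by nlinarith

theorem exists_int_mem_Icc_abs_sub_mul_le {ε x : ℝ} (hε : 0 < ε) (hx : |x| ≤ 1) :
    ∃ k ∈ Finset.Icc (-(⌈ε⁻¹⌉₊ : ℤ)) ⌈ε⁻¹⌉₊, |k * ε - x| ≤ ε := by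
  have hxε : |x / ε| ≤ ⌈ε⁻¹⌉₊ := by
    rw [abs_div, abs_of_pos hε, div_le_iff₀ hε]
    calc |x| ≤ ε⁻¹ * ε := by rwa [inv_mul_cancel₀ hε.ne']
      _ ≤ ⌈ε⁻¹⌉₊ * ε := by gcongr; exact Nat.le_ceil _
  refine ⟨⌊x / ε⌋, Finset.mem_Icc.2 ⟨?_, ?_⟩, ?_⟩
  · exact Int.le_floor.2 (by push_cast; linarith [neg_abs_le (x / ε)])
  · exact Int.floor_le_iff.2 (by push_cast; linarith [le_abs_self (x / ε)])
  · have h0 := Int.floor_le (x / ε)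
    have h1 := Int.lt_floor_add_one (x / ε)
    rw [abs_le]
    constructor <;> nlinarith [div_mul_cancel₀ x hε.ne']

noncomputable def gaussianGrid (ε : ℝ) (N : ℕ) : Finset ℂ :=
  (Finset.Icc (-(N : ℤ)) N ×ˢ Finset.Icc (-(N : ℤ)) N).image fun k => ⟨k.1 * ε, k.2 * ε⟩

theorem card_gaussianGrid_le (ε : ℝ) (N : ℕ) : (gaussianGrid ε N).card ≤ (2 * N + 1) ^ 2 := by
  refine Finset.card_image_le.trans_eq ?_
  rw [Finset.card_product, Int.card_Icc, sq]
  congr 1 <;> omega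

theorem exists_mem_gaussianGrid_norm_sub_sq_le {ε : ℝ} (hε : 0 < ε) {z : ℂ} (hz : ‖z‖ ≤ 1) :
    ∃ q ∈ gaussianGrid ε ⌈ε⁻¹⌉₊, ‖q - z‖ ^ 2 ≤ 2 * ε ^ 2 := by
  obtain ⟨m, hm, hre⟩ := exists_int_mem_Icc_abs_sub_mul_le hε ((Complex.abs_re_le_norm z).trans hz)
  obtain ⟨n, hn, him⟩ := exists_int_mem_Icc_abs_sub_mul_le hε ((Complex.abs_im_le_norm z).trans hz)
  refine ⟨⟨m * ε, n * ε⟩, Finset.mem_image.2 ⟨(m, n), Finset.mem_product.2 ⟨hm, hn⟩, rfl⟩, ?_⟩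
  have hre2 := sq_le_sq' (abs_le.1 hre).1 (abs_le.1 hre).2
  have him2 := sq_le_sq' (abs_le.1 him).1 (abs_le.1 him).2
  rw [Complex.sq_norm, Complex.normSq_apply, Complex.sub_re, Complex.sub_im, ← sq, ← sq]
  linarith

def euclideanGrid (ι : Type*) [Fintype ι] [DecidableEq ι] {𝕜 : Type*} (S : Finset 𝕜) :
    Finset (EuclideanSpace 𝕜 ι) :=
  (Fintype.piFinset fun _ : ι => S).map (WithLp.equiv 2 (ι → 𝕜)).symm.toEmbedding

section euclideanGrid

variable {ι 𝕜 : Type*} [Fintype ι] [DecidableEq ι]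

theorem card_euclideanGrid (S : Finset 𝕜) :
    (euclideanGrid ι S).card = S.card ^ Fintype.card ι := by
  simp [euclideanGrid]

theorem exists_mem_euclideanGrid_norm_sub_sq_le [RCLike 𝕜] {S : Finset 𝕜} {η : ℝ}
    (hS : ∀ z : 𝕜, ‖z‖ ≤ 1 → ∃ q ∈ S, ‖q - z‖ ^ 2 ≤ η) {h : EuclideanSpace 𝕜 ι} (hh : ‖h‖ ≤ 1) :
    ∃ p ∈ euclideanGrid ι S, ‖p - h‖ ^ 2 ≤ Fintype.card ι * η := by
  choose q hqS hq using fun i => hS (h i) ((PiLp.norm_apply_le h i).trans hh)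
  refine ⟨WithLp.toLp 2 q, ?_, ?_⟩
  · simpa [euclideanGrid] using hqS
  · calc ‖WithLp.toLp 2 q - h‖ ^ 2 = ∑ i, ‖q i - h i‖ ^ 2 := EuclideanSpace.norm_sq_eq _
      _ ≤ ∑ _i : ι, η := Finset.sum_le_sum fun i _ => hq i
      _ = Fintype.card ι * η := by simp

end euclideanGrid

theorem card_euclideanGrid_gaussianGrid_le (ι : Type*) [Fintype ι] [DecidableEq ι] {ε : ℝ}
    (hε : 0 < ε) (hε1 : ε ≤ 1) :
    ((euclideanGrid ι (gaussianGrid ε ⌈ε⁻¹⌉₊)).card : ℝ) ≤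
      5 ^ (2 * Fintype.card ι) * (ε ^ (2 * Fintype.card ι))⁻¹ := by
  have hside : 2 * (⌈ε⁻¹⌉₊ : ℝ) + 1 ≤ 5 * ε⁻¹ := by
    have := Nat.ceil_lt_add_one (inv_nonneg.2 hε.le)
    have := one_le_inv_iff₀.2 ⟨hε, hε1⟩
    linarith
  rw [card_euclideanGrid, ← inv_pow, ← mul_pow, pow_mul]
  push_cast
  gcongr
  calc ((gaussianGrid ε ⌈ε⁻¹⌉₊).card : ℝ) ≤ (2 * ⌈ε⁻¹⌉₊ + 1 : ℕ) ^ 2 := by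
        exact_mod_cast card_gaussianGrid_le ε _
    _ ≤ (5 * ε⁻¹) ^ 2 := by push_cast; gcongr

theorem exists_good_codebooks_general (t : ℕ) :
    ∃ C₀ : ℝ, 0 < C₀ ∧ ∃ δ₀ : ℝ, 0 < δ₀ ∧ ∀ δ : ℝ, 0 < δ → δ < δ₀ →
      ∃ B : Finset (EuclideanSpace ℂ (Fin t)),
        (∀ x ∈ B, ‖x‖ = 1) ∧
        (B.card : ℝ) ≤ C₀ * (δ ^ (2 * t))⁻¹ ∧
        ∀ h : EuclideanSpace ℂ (Fin t), ‖h‖ = 1 →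
          ∃ x ∈ B, 1 - δ ≤ ‖(inner ℂ x h : ℂ)‖ ^ 2 := by
  refine ⟨5 ^ (2 * t), by positivity, (8 * t + 1)⁻¹, by positivity, fun δ hδ hδ₀ => ?_⟩
  have hsmall : (8 * t + 1) * δ < 1 :=
    (lt_inv_mul_iff₀ (by positivity)).1 (by simpa using hδ₀)
  have hδ1 : δ ≤ 1 := by nlinarith
  obtain ⟨B, hB_unit, hB_card, hB_cover⟩ := exists_unit_finset_of_approx
    (S := euclideanGrid (Fin t) (gaussianGrid δ ⌈δ⁻¹⌉₊)) (η := t * (2 * δ ^ 2)) (by nlinarith)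
    fun h hh => by
      simpa using exists_mem_euclideanGrid_norm_sub_sq_le
        (fun z hz => exists_mem_gaussianGrid_norm_sub_sq_le hδ hz) hh.le
  refine ⟨B, hB_unit, ?_, fun h hh => ?_⟩
  · calc (B.card : ℝ) ≤ (euclideanGrid (Fin t) (gaussianGrid δ ⌈δ⁻¹⌉₊)).card := by
          exact_mod_cast hB_card
      _ ≤ 5 ^ (2 * t) * (δ ^ (2 * t))⁻¹ := by
          simpa using card_euclideanGrid_gaussianGrid_le (Fin t) hδ hδ1
  · obtain ⟨x, hxB, hx⟩ := hB_cover h hh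
    refine ⟨x, hxB, ?_⟩
    nlinarith [one_sub_norm_sub_sq_le_norm_inner_sq (𝕜 := ℂ) (hB_unit x hxB) hh]

/-- Proposition 2: existence of good beamforming codebooks. There is a constant `C₀ > 0`
(depending only on `t`) such that for every sufficiently small `δ > 0` there is a codebook
`B_δ` of unit vectors with `|B_δ| ≤ C₀ δ^{-2t}` covering the unit sphere: every unit vector
`h̄` has some `x ∈ B_δ` with `|⟨x, h̄⟩|² ≥ 1 - δ`. -/
theorem exists_good_codebooks (t : ℕ) (ht : 1 ≤ t) :
    ∃ C₀ : ℝ, 0 < C₀ ∧ ∃ δ₀ : ℝ, 0 < δ₀ ∧ ∀ δ : ℝ, 0 < δ → δ < δ₀ →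
      ∃ B : Finset (EuclideanSpace ℂ (Fin t)),
        (∀ x ∈ B, ‖x‖ = 1) ∧
        (B.card : ℝ) ≤ C₀ * (δ ^ (2 * t))⁻¹ ∧
        ∀ h : EuclideanSpace ℂ (Fin t), ‖h‖ = 1 →
          ∃ x ∈ B, 1 - δ ≤ ‖(inner ℂ x h : ℂ)‖ ^ 2 :=
  exists_good_codebooks_general t
end

section
/- (Prefix-free code lemma used in the converse proofs.) Let I be a countable index set with |I| ≥ 3, let ℓ : I → ℕ satisfy ℓ_n ≥ 1 for all n and the Kraft inequality Σ_{n∈I} 2^{−ℓ_n} ≤ 1, and let p : I → [0,1] satisfy Σ_{n∈I} p_n = 1. If R ≥ 0 and Σ_{n∈I} p_n·ℓ_n ≤ 1 + R, then there exists an index i ∈ I with p_i ≥ 1 − R. (In particular, at most one codeword can have length 1, and all other codewords have length at least 2.) -/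
/-- Prefix-free code lemma: if a countable prefix-free binary code (codeword lengths
satisfying the Kraft inequality) has at least 3 codewords of positive length, and the
expected codeword length under a probability assignment `p` is at most `1 + R`, then some
cell carries probability at least `1 - R`. -/
theorem prefix_code_high_prob_cell (I : Type) (hI : Countable I)
    (hcard : ∃ a b c : I, a ≠ b ∧ a ≠ c ∧ b ≠ c)
    (len : I → ℕ) (hlen : ∀ n, 1 ≤ len n)
    (kraft : ∑' n, ((2 : ENNReal) ^ len n)⁻¹ ≤ 1)
    (p : I → ℝ) (hp : ∀ n, 0 ≤ p n) (hp' : ∀ n, p n ≤ 1)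
    (hpsum : ∑' n, ENNReal.ofReal (p n) = 1)
    (R : ℝ) (hR : 0 ≤ R)
    (hrate : ∑' n, ENNReal.ofReal (p n) * (len n : ENNReal) ≤ ENNReal.ofReal (1 + R)) :
    ∃ i : I, 1 - R ≤ p i := by
  classical
  obtain ⟨a, b, c, hab, hac, hbc⟩ := hcard
  rcases le_or_gt 1 R with hR1 | hR1
  · exact ⟨a, le_trans (by linarith) (hp a)⟩
  -- at most one index of length 1
  have huniq : ∀ i j : I, len i = 1 → len j = 1 → i = j := by
    intro i j hi hj
    by_contra hij
    have hk : ∃ k : I, k ≠ i ∧ k ≠ j := by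
      by_contra h
      push_neg at h
      have h' : ∀ k : I, k = i ∨ k = j := fun k => by
        rcases eq_or_ne k i with hk | hk
        · exact Or.inl hk
        · exact Or.inr (h k hk)
      rcases h' a with rfl | rfl <;> rcases h' b with rfl | rfl <;>
        rcases h' c with rfl | rfl <;> simp_all
    obtain ⟨k, hki, hkj⟩ := hk
    have hfin : ({i, j, k} : Finset I).sum (fun n => ((2:ENNReal) ^ len n)⁻¹) ≤ 1 :=
      le_trans (ENNReal.sum_le_tsum _) kraft
    have hsum : ({i, j, k} : Finset I).sum (fun n => ((2:ENNReal) ^ len n)⁻¹)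
        = 2⁻¹ + (2⁻¹ + ((2:ENNReal) ^ len k)⁻¹) := by
      rw [Finset.sum_insert (by simp [hij, hki.symm]), Finset.sum_insert (by simp [hkj.symm]),
        Finset.sum_singleton, hi, hj, pow_one]
    rw [hsum] at hfin
    have hpos : (0:ENNReal) < ((2:ENNReal) ^ len k)⁻¹ := by
      rw [ENNReal.inv_pos]
      exact ENNReal.pow_ne_top (by norm_num)
    have hlt : (1:ENNReal) < 2⁻¹ + (2⁻¹ + ((2:ENNReal) ^ len k)⁻¹) := by
      rw [← add_assoc, ENNReal.inv_two_add_inv_two]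
      exact ENNReal.lt_add_right ENNReal.one_ne_top hpos.ne'
    exact absurd hfin (not_le.mpr hlt)
  -- there is an index of length 1
  have hex : ∃ i, len i = 1 := by
    by_contra h
    push_neg at h
    have h2 : ∀ n, 2 ≤ len n := fun n => lt_of_le_of_ne (hlen n) (Ne.symm (h n))
    have hge2 : (2:ENNReal) ≤ ∑' n, ENNReal.ofReal (p n) * (len n : ENNReal) := by
      calc (2:ENNReal) = ∑' n, ENNReal.ofReal (p n) * 2 := by
            rw [ENNReal.tsum_mul_right, hpsum, one_mul]
      _ ≤ _ := ENNReal.tsum_le_tsum fun n => by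
            gcongr
            exact_mod_cast h2 n
    have h3 : (2:ENNReal) ≤ ENNReal.ofReal (1+R) := le_trans hge2 hrate
    rw [show (2:ENNReal) = ENNReal.ofReal 2 by norm_num] at h3
    have := (ENNReal.ofReal_le_ofReal_iff (by linarith)).mp h3
    linarith
  obtain ⟨i, hi⟩ := hex
  refine ⟨i, ?_⟩
  set S : ENNReal := ∑' n, if n = i then 0 else ENNReal.ofReal (p n) with hS
  have hsplit : ∑' n, ENNReal.ofReal (p n) = ENNReal.ofReal (p i) + S :=
    ENNReal.tsum_eq_add_tsum_ite i
  have h1 : ENNReal.ofReal (p i) + S = 1 := by rw [← hsplit, hpsum]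
  have hSfin : S ≠ ⊤ := by
    intro hT
    rw [hT] at h1
    simp at h1
  have hrate2 : ∑' n, ENNReal.ofReal (p n) * (len n : ENNReal)
      = ENNReal.ofReal (p i) + ∑' n, if n = i then 0
          else ENNReal.ofReal (p n) * (len n : ENNReal) := by
    rw [ENNReal.tsum_eq_add_tsum_ite i, hi]
    norm_num
  have h2S : 2 * S ≤ ∑' n, if n = i then 0
      else ENNReal.ofReal (p n) * (len n : ENNReal) := by
    rw [hS, ← ENNReal.tsum_mul_left]
    refine ENNReal.tsum_le_tsum fun n => ?_
    by_cases hn : n = i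
    · simp [hn]
    · simp only [hn, if_false]
      have h2n : (2:ENNReal) ≤ (len n : ENNReal) := by
        exact_mod_cast lt_of_le_of_ne (hlen n) fun he => hn (huniq n i he.symm hi)
      calc 2 * ENNReal.ofReal (p n) = ENNReal.ofReal (p n) * 2 := mul_comm _ _
        _ ≤ ENNReal.ofReal (p n) * (len n : ENNReal) := by gcongr
  have key : 1 + S ≤ ENNReal.ofReal (1 + R) := by
    calc (1:ENNReal) + S = ENNReal.ofReal (p i) + S + S := by rw [h1]
      _ = ENNReal.ofReal (p i) + 2 * S := by ring
      _ ≤ ENNReal.ofReal (p i) + ∑' n, if n = i then 0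
            else ENNReal.ofReal (p n) * (len n : ENNReal) := by gcongr
      _ = ∑' n, ENNReal.ofReal (p n) * (len n : ENNReal) := hrate2.symm
      _ ≤ _ := hrate
  have key2 : S ≤ ENNReal.ofReal R := by
    rw [show ENNReal.ofReal (1 + R) = 1 + ENNReal.ofReal R by
      rw [ENNReal.ofReal_add zero_le_one hR, ENNReal.ofReal_one]] at key
    exact (ENNReal.add_le_add_iff_left ENNReal.one_ne_top).mp key
  have : (1:ENNReal) ≤ ENNReal.ofReal (p i + R) := by
    calc (1:ENNReal) = ENNReal.ofReal (p i) + S := h1.symm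
      _ ≤ ENNReal.ofReal (p i) + ENNReal.ofReal R := by gcongr
      _ = ENNReal.ofReal (p i + R) := (ENNReal.ofReal_add (hp i) hR).symm
  have := ENNReal.one_le_ofReal.mp this
  linarith
end
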